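/- arXiv:2006.08286 — 3 statements merged into one kernel-verified Lean document; each statement's English description precedes it below -/
import Mathlib

section
/- Let N be a finitely generated nilpotent group, α an endomorphism of N, and 1 = N₀ ⊆ N₁ ⊆ ⋯ ⊆ N_c = N a central series with α(N_i) ⊆ N_i and N_i/N_{i-1} torsion-free for all i. If α_i denotes the induced endomorphism of N_i/N_{i-1}, then R(α) = ∏_{i=1}^c R(α_i). -/
/-- Twisted conjugacy via an endomorphism `α`. -/
def twistedConj {G : Type*} [Group G] (α : G →* G) (x y : G) : Prop :=
  ∃ z : G, x = z * y * (α z)⁻¹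

/-- The Reidemeister number (0 encodes ∞). -/
noncomputable def reidemeisterNumber {G : Type*} [Group G] (α : G →* G) : ℕ :=
  Nat.card (Quot (twistedConj α))

/-!
Twisted classes of `α` surject onto those of any induced endomorphism of a quotient, so an
infinite Reidemeister number of a quotient makes both sides vanish. Otherwise pass down the series
through the quotients `N ⧸ N_k`: the projection `N ⧸ N_k → N ⧸ N_{k+1}` is a central extension
with kernel `N_{k+1}/N_k`, and when the endomorphism `β` induced on the quotient has trivial
twisted stabilisers (`u q β(u)⁻¹ = q → u = 1`), the map `(C, [a]) ↦ [rep C · a]` is a bijection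
from pairs of twisted classes onto the twisted classes of the extension, so Reidemeister numbers
multiply.

Trivial stabilisers come from descending the series: an element of a twisted stabiliser lying in
`N_{i+1}` is fixed modulo `N_i`, and factors with finite Reidemeister number have no non-trivial
fixed points. Indeed a factor is a finitely generated torsion-free abelian group (subgroups of
finitely generated nilpotent groups are finitely generated), where `R(β)` is the index of the
image of `z ↦ z β(z)⁻¹`, and by rank–nullity a finite-index image forces this map to be injective.
-/

open Subgroup
open scoped commutatorElement

section Basic

variable {G Q : Type*} [Group G] [Group Q] {α : G →* G} {β : Q →* Q}

theorem twistedConj_equivalence (α : G →* G) : Equivalence (twistedConj α) where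
  refl x := ⟨1, by simp⟩
  symm := by
    rintro x y ⟨z, rfl⟩
    exact ⟨z⁻¹, by simp [mul_assoc]⟩
  trans := by
    rintro x y w ⟨z, rfl⟩ ⟨v, rfl⟩
    exact ⟨z * v, by simp [mul_assoc]⟩

theorem quot_mk_eq_iff_twistedConj {x y : G} :
    Quot.mk (twistedConj α) x = Quot.mk (twistedConj α) y ↔ twistedConj α x y := by
  rw [Quot.eq, (twistedConj_equivalence α).eqvGen_iff]

theorem twistedConj.map (π : G →* Q) (hπ : ∀ x, π (α x) = β (π x)) {x y : G}
    (h : twistedConj α x y) : twistedConj β (π x) (π y) := by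
  obtain ⟨z, rfl⟩ := h
  exact ⟨π z, by simp [hπ]⟩

theorem reidemeisterNumber_eq_of_bijective (π : G →* Q) (hπ : Function.Bijective π)
    (hαβ : ∀ x, π (α x) = β (π x)) : reidemeisterNumber α = reidemeisterNumber β := by
  refine Nat.card_congr <|
    Quot.congr (Equiv.ofBijective π hπ) fun x y => ⟨twistedConj.map π hαβ, ?_⟩
  rintro ⟨w, hw⟩
  obtain ⟨z, rfl⟩ := hπ.2 w
  exact ⟨z, hπ.1 (by simpa [hαβ] using hw)⟩

theorem reidemeisterNumber_ne_zero_of_surjective (π : G →* Q) (hπ : Function.Surjective π)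
    (hαβ : ∀ x, π (α x) = β (π x)) (hα : reidemeisterNumber α ≠ 0) :
    reidemeisterNumber β ≠ 0 := by
  have : Finite (Quot (twistedConj α)) := (Nat.card_ne_zero.mp hα).2
  have hsurj : Function.Surjective (Quot.map π fun _ _ => twistedConj.map π hαβ) := by
    rintro ⟨y⟩
    obtain ⟨x, rfl⟩ := hπ y
    exact ⟨Quot.mk _ x, rfl⟩
  have : Finite (Quot (twistedConj β)) := Finite.of_surjective _ hsurj
  exact Nat.card_ne_zero.mpr ⟨⟨Quot.mk _ 1⟩, this⟩

theorem reidemeisterNumber_of_subsingleton [Subsingleton G] (α : G →* G) :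
    reidemeisterNumber α = 1 := by
  have : Subsingleton (Quot (twistedConj α)) := ⟨by rintro ⟨x⟩ ⟨y⟩; rw [Subsingleton.elim x y]⟩
  have : Nonempty (Quot (twistedConj α)) := ⟨Quot.mk _ 1⟩
  exact Nat.card_unique

end Basic

section Abelian

theorem LinearMap.injective_of_isTorsion_quotient_range {R A : Type*} [CommRing R] [IsDomain R]
    [IsNoetherianRing R] [AddCommGroup A] [Module R A] [Module.Finite R A]
    [Module.IsTorsionFree R A]
    (φ : A →ₗ[R] A) (h : Module.IsTorsion R (A ⧸ range φ)) : Function.Injective φ := by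
  have hquot : Module.finrank R (A ⧸ range φ) = 0 := Module.finrank_eq_zero_iff_isTorsion.mpr h
  have hrange := Submodule.finrank_quotient_add_finrank (range φ)
  have hker := Submodule.finrank_quotient_add_finrank (ker φ)
  have hiso := φ.quotKerEquivRange.finrank_eq
  have : Subsingleton (ker φ) := (Module.finrank_zero_iff (R := R)).mp (by omega)
  exact LinearMap.ker_eq_bot.mp Submodule.eq_bot_of_subsingleton

theorem reidemeisterNumber_eq_index_range {M : Type*} [CommGroup M] (β : M →* M) :
    reidemeisterNumber β = (MonoidHom.id M / β).range.index := by
  refine Nat.card_congr (Quot.congrRight fun x y => ?_)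
  rw [QuotientGroup.leftRel_apply, ← inv_mem_iff, mul_inv_rev, inv_inv]
  refine exists_congr fun z => ?_
  rw [MonoidHom.div_apply, MonoidHom.id_apply, eq_inv_mul_iff_mul_eq, eq_comm, mul_div_left_comm,
    div_eq_mul_inv, mul_assoc]

theorem MonoidHom.injective_of_index_range_ne_zero {M : Type*} [CommGroup M] [Group.FG M]
    [IsMulTorsionFree M] (f : M →* M) (hf : f.range.index ≠ 0) : Function.Injective f := by
  have : Module.Finite ℤ (Additive M) := Module.Finite.iff_addGroup_fg.mpr inferInstance
  refine f.toAdditive.toIntLinearMap.injective_of_isTorsion_quotient_range ?_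
  intro q
  obtain ⟨x, rfl⟩ := Submodule.Quotient.mk_surjective _ q
  refine ⟨⟨f.range.index, mem_nonZeroDivisors_of_ne_zero (by exact_mod_cast hf)⟩, ?_⟩
  rw [Submonoid.mk_smul, ← Submodule.Quotient.mk_smul, Submodule.Quotient.mk_eq_zero]
  obtain ⟨y, hy⟩ := f.range.pow_index_mem (Additive.toMul x)
  exact ⟨Additive.ofMul y, by simpa using congrArg Additive.ofMul hy⟩

theorem eq_one_of_map_eq_self_of_reidemeisterNumber_ne_zero {M : Type*} [CommGroup M]
    [Group.FG M] [IsMulTorsionFree M] {β : M →* M} (hβ : reidemeisterNumber β ≠ 0) {x : M}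
    (hx : β x = x) : x = 1 :=
  (MonoidHom.id M / β).injective_of_index_range_ne_zero
    (by rwa [← reidemeisterNumber_eq_index_range]) (by simp [hx])

end Abelian

section FG

variable {G Q : Type*} [Group G] [Group Q]

theorem Subgroup.fg_of_commGroup {A : Type*} [CommGroup A] [Group.FG A] (B : Subgroup A) :
    B.FG := by
  have : Module.Finite ℤ (Additive A) := Module.Finite.iff_addGroup_fg.mpr inferInstance
  rw [Subgroup.fg_iff_add_fg, ← AddSubgroup.toIntSubmodule_toAddSubgroup B.toAddSubgroup,
    ← Submodule.fg_iff_addSubgroup_fg]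
  exact IsNoetherian.noetherian _

open scoped IsMulCommutative in
theorem Subgroup.FG.of_le_of_le_center {L M : Subgroup G} (hM : M.FG) (hMc : M ≤ center G)
    (hLM : L ≤ M) : L.FG := by
  have : IsMulCommutative M :=
    ⟨⟨fun a b => Subtype.ext (mem_center_iff.mp (hMc b.2) a)⟩⟩
  have : Group.FG M := (Group.fg_iff_subgroup_fg M).mpr hM
  obtain ⟨S, hS, hSfin⟩ := (Subgroup.fg_iff _).mp (L.subgroupOf M).fg_of_commGroup
  refine (Subgroup.fg_iff L).mpr ⟨M.subtype '' S, ?_, hSfin.image _⟩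
  rw [← MonoidHom.map_closure, hS, subgroupOf_map_subtype, inf_of_le_left hLM]

theorem Subgroup.FG.exists_finite_closure_map_eq {f : G →* Q} {K : Subgroup G}
    (h : (K.map f).FG) : ∃ Y : Set G, Y.Finite ∧ Y ⊆ K ∧ (closure Y).map f = K.map f := by
  obtain ⟨T, hT, hTfin⟩ := (Subgroup.fg_iff _).mp h
  have hlift : ∀ t : T, ∃ k ∈ K, f k = t := fun t => mem_map.mp (hT ▸ subset_closure t.2)
  choose g hgK hg using hlift
  have : Finite T := hTfin
  refine ⟨Set.range g, Set.finite_range g, Set.range_subset_iff.mpr hgK, ?_⟩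
  rw [MonoidHom.map_closure, ← Set.range_comp, ← hT]
  congr
  ext
  simp [hg]

theorem Subgroup.fg_of_fg_inf_ker_of_fg_map {f : G →* Q} {K : Subgroup G}
    (hker : (K ⊓ f.ker).FG) (hmap : (K.map f).FG) : K.FG := by
  obtain ⟨Y, hYfin, hYK, hY⟩ := hmap.exists_finite_closure_map_eq
  have hclosure : closure Y ≤ K := (closure_le K).mpr hYK
  suffices K = closure Y ⊔ (K ⊓ f.ker) from
    this ▸ ((Subgroup.fg_iff _).mpr ⟨Y, rfl, hYfin⟩).sup hker
  refine le_antisymm (fun k hk => ?_) (sup_le hclosure inf_le_left)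
  obtain ⟨w, hw, hwk⟩ : f k ∈ (closure Y).map f := hY ▸ mem_map_of_mem f hk
  have hker : w⁻¹ * k ∈ K ⊓ f.ker :=
    mem_inf.mpr ⟨mul_mem (inv_mem (hclosure hw)) hk, by simp [hwk]⟩
  simpa using mul_mem_sup hw hker

/-- Modulo the subgroup generated by these commutators, each `x ∈ X` commutes with the generators
`S` and so is central; hence so is `A`. -/
theorem commutator_top_le_closure_image2 {A : Subgroup G} {X S : Set G}
    (hc : ⁅A, ⊤⁆ ≤ center G) (hXA : X ⊆ A) (hS : closure S = ⊤)
    (hA : A ≤ closure X ⊔ ⁅A, ⊤⁆) :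
    ⁅A, ⊤⁆ ≤ closure (Set.image2 (⁅·, ·⁆) X S) := by
  set W := closure (Set.image2 (⁅·, ·⁆) X S)
  have hWc : W ≤ center G := (closure_le _).mpr <| by
    rintro _ ⟨x, hx, s, -, rfl⟩
    exact hc (commutator_mem_commutator (hXA hx) (mem_top s))
  have : W.Normal := ⟨fun n hn g => by
    rw [mem_center_iff.mp (hWc hn) g, mul_inv_cancel_right]
    exact hn⟩
  let π := QuotientGroup.mk' W
  have hπ : Function.Surjective π := QuotientGroup.mk'_surjective W
  have hX : π '' X ⊆ center (G ⧸ W) := by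
    rintro _ ⟨x, hx, rfl⟩
    rw [← centralizer_univ, ← coe_top, ← map_top_of_surjective π hπ, ← hS, MonoidHom.map_closure,
      centralizer_closure]
    rintro _ ⟨s, hs, rfl⟩
    have : π ⁅x, s⁆ = 1 := (QuotientGroup.eq_one_iff _).mpr (subset_closure ⟨x, hx, s, hs, rfl⟩)
    rw [map_commutatorElement, commutatorElement_eq_one_iff_mul_comm] at this
    exact this.symm
  have hAπ : A.map π ≤ center (G ⧸ W) := by
    refine (map_mono hA).trans ?_
    rw [Subgroup.map_sup, MonoidHom.map_closure]
    refine sup_le ((closure_le _).mpr hX) (map_le_iff_le_comap.mpr fun z hz => ?_)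
    refine mem_center_iff.mpr fun q => ?_
    obtain ⟨g, rfl⟩ := hπ q
    rw [← map_mul, ← map_mul, mem_center_iff.mp (hc hz) g]
  change ⁅A, ⊤⁆ ≤ W
  rw [← QuotientGroup.ker_mk' W, ← Subgroup.map_eq_bot_iff, map_commutator,
    map_top_of_surjective π hπ]
  exact commutator_top_right_eq_bot_iff_le_center.mpr hAπ

theorem Subgroup.fg_lowerCentralSeries_succ [Group.FG G] {n : ℕ}
    (hc : (⊤ : Subgroup G).lowerCentralSeries (n + 1) ≤ center G)
    (hQ : ∀ K : Subgroup (G ⧸ (⊤ : Subgroup G).lowerCentralSeries (n + 1)), K.FG) :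
    ((⊤ : Subgroup G).lowerCentralSeries (n + 1)).FG := by
  set M := (⊤ : Subgroup G).lowerCentralSeries (n + 1)
  set A := (⊤ : Subgroup G).lowerCentralSeries n
  obtain ⟨Y, hYfin, hYA, hY⟩ := (hQ (A.map (QuotientGroup.mk' M))).exists_finite_closure_map_eq
  obtain ⟨S, hS, hSfin⟩ := Group.fg_iff.mp ‹Group.FG G›
  have hA : A ≤ closure Y ⊔ M := by
    rw [← QuotientGroup.ker_mk' M, ← map_le_map_iff, hY]
  have hM : closure (Set.image2 (⁅·, ·⁆) Y S) = M := by
    refine le_antisymm ((closure_le _).mpr ?_) (commutator_top_le_closure_image2 hc hYA hS hA)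
    rintro _ ⟨y, hy, s, -, rfl⟩
    exact commutator_mem_commutator (hYA hy) (mem_top s)
  exact (Subgroup.fg_iff M).mpr ⟨_, hM, hYfin.image2 _ hSfin⟩

theorem Subgroup.fg_of_lowerCentralSeries_eq_bot [Group.FG G] {n : ℕ}
    (hn : (⊤ : Subgroup G).lowerCentralSeries n = ⊥) (K : Subgroup G) : K.FG := by
  induction n generalizing G with
  | zero =>
    rw [eq_bot_mono (show K ≤ (⊤ : Subgroup G).lowerCentralSeries 0 from le_top) hn]
    exact FG.bot
  | succ n ih =>
    set M := (⊤ : Subgroup G).lowerCentralSeries n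
    have hMc : M ≤ center G := commutator_top_right_eq_bot_iff_le_center.mp hn
    have hQ : ∀ L : Subgroup (G ⧸ M), L.FG := by
      refine ih ?_
      rw [← map_top_of_surjective _ (QuotientGroup.mk'_surjective M), ← map_lowerCentralSeries,
        Subgroup.map_eq_bot_iff, QuotientGroup.ker_mk']
    have hMfg : M.FG := by
      cases n with
      | zero => exact Group.fg_def.mp ‹Group.FG G›
      | succ m => exact fg_lowerCentralSeries_succ hMc hQ
    refine fg_of_fg_inf_ker_of_fg_map (f := QuotientGroup.mk' M) ?_ (hQ _)
    rw [QuotientGroup.ker_mk']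
    exact hMfg.of_le_of_le_center hMc inf_le_right

theorem Subgroup.fg_of_isNilpotent [Group.FG G] [Group.IsNilpotent G] (K : Subgroup G) : K.FG :=
  fg_of_lowerCentralSeries_eq_bot (nilpotent_iff_lowerCentralSeries.mp ‹_›).choose_spec K

end FG

section CentralExtension

variable {A G Q : Type*} [Group A] [Group G] [Group Q] {αA : A →* A} {α : G →* G}
  {β : Q →* Q}

theorem twistedConj.mul_left_of_commute {ι : A →* G} (hcentral : ∀ a g, Commute (ι a) g)
    (hια : ∀ a, ι (αA a) = α (ι a)) (g : G) {a a' : A} (h : twistedConj αA a a') :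
    twistedConj α (g * ι a) (g * ι a') := by
  obtain ⟨b, rfl⟩ := h
  refine ⟨ι b, ?_⟩
  simp only [map_mul, map_inv, hια, ← mul_assoc, (hcentral b g).eq]

theorem reidemeisterNumber_eq_mul_of_central_extension (ι : A →* G) (π : G →* Q)
    (hι : Function.Injective ι) (hπ : Function.Surjective π) (hexact : π.ker = ι.range)
    (hcentral : ∀ a g, Commute (ι a) g) (hια : ∀ a, ι (αA a) = α (ι a))
    (hπα : ∀ x, π (α x) = β (π x)) (hfix : ∀ q u : Q, u * q * (β u)⁻¹ = q → u = 1) :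
    reidemeisterNumber α = reidemeisterNumber β * reidemeisterNumber αA := by
  have hπι : ∀ a, π (ι a) = 1 := fun a => hexact.ge ⟨a, rfl⟩
  let rep : Quot (twistedConj β) → G := fun C => Function.surjInv hπ C.out
  have hrep : ∀ C, Quot.mk _ (π (rep C)) = C := fun C => by
    simp only [rep, Function.surjInv_eq hπ, Quot.out_eq]
  let Φ (p : Quot (twistedConj β) × Quot (twistedConj αA)) : Quot (twistedConj α) :=
    Quot.lift (fun a => Quot.mk _ (rep p.1 * ι a))
      (fun _ _ h => Quot.sound (twistedConj.mul_left_of_commute hcentral hια _ h)) p.2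
  have hinj : Function.Injective Φ := by
    rintro ⟨C, ⟨a⟩⟩ ⟨C', ⟨a'⟩⟩ h
    obtain ⟨z, hz⟩ := quot_mk_eq_iff_twistedConj.mp h
    have hπz : π (rep C) = π z * π (rep C') * (β (π z))⁻¹ := by
      simpa [hπι, hπα] using congrArg π hz
    obtain rfl : C = C' := by rw [← hrep C, ← hrep C']; exact Quot.sound ⟨π z, hπz⟩
    obtain ⟨b, rfl⟩ : z ∈ ι.range := hexact ▸ hfix _ _ hπz.symm
    have : ι a = ι (b * a' * (αA b)⁻¹) := by
      rw [← hια, (hcentral b _).eq] at hz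
      rw [map_mul, map_mul, map_inv, (hcentral b (ι a')).eq]
      simpa [mul_assoc] using hz
    exact Prod.ext rfl (Quot.sound ⟨b, hι this⟩)
  have hsurj : Function.Surjective Φ := by
    rintro ⟨x⟩
    set C := Quot.mk (twistedConj β) (π x)
    obtain ⟨u, hu⟩ := quot_mk_eq_iff_twistedConj.mp (hrep C).symm
    obtain ⟨z, rfl⟩ := hπ u
    obtain ⟨a, ha⟩ : (rep C)⁻¹ * (z⁻¹ * x * α z) ∈ ι.range := by
      rw [← hexact, MonoidHom.mem_ker, map_mul, map_mul, map_mul, map_inv, map_inv, hπα, hu]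
      group
    refine ⟨(C, Quot.mk _ a), Quot.sound ⟨z⁻¹, ?_⟩⟩
    show rep _ * ι a = z⁻¹ * x * (α z⁻¹)⁻¹
    rw [ha, map_inv, inv_inv, mul_inv_cancel_left]
  rw [reidemeisterNumber, reidemeisterNumber, reidemeisterNumber, ← Nat.card_prod]
  exact (Nat.card_congr (Equiv.ofBijective Φ ⟨hinj, hsurj⟩)).symm

end CentralExtension

section CentralSeries

variable {G : Type*} [Group G] (α : G →* G)

abbrev quotientEndo (K : Subgroup G) [K.Normal] (hK : K.map α ≤ K) : G ⧸ K →* G ⧸ K :=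
  QuotientGroup.map K K α (map_le_iff_le_comap.mp hK)

def factorEndo (K L : Subgroup G) [(K.subgroupOf L).Normal] (hK : K.map α ≤ K)
    (hL : L.map α ≤ L) : L ⧸ K.subgroupOf L →* L ⧸ K.subgroupOf L :=
  QuotientGroup.map _ _ ((α.domRestrict L).codRestrict L fun x => hL (mem_map_of_mem α x.2))
    fun _ hx => hK (mem_map_of_mem α hx)

theorem inv_mul_mem_of_commutator_top_le {K L : Subgroup G} (hc : ⁅(⊤ : Subgroup G), L⁆ ≤ K)
    {a : G} (ha : a ∈ L) (g : G) : (a * g)⁻¹ * (g * a) ∈ K := by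
  have : (a * g)⁻¹ * (g * a) = ⁅g⁻¹, a⁻¹⁆ := by group
  rw [this]
  exact hc (commutator_mem_commutator (mem_top _) (inv_mem ha))

variable {α}

theorem eq_one_of_mul_mul_inv_quotientEndo_eq {L : Subgroup G} [L.Normal] (hL : L.map α ≤ L)
    (hfix : ∀ u q : G, (α u)⁻¹ * (q⁻¹ * u * q) ∈ L → u ∈ L) (q u : G ⧸ L)
    (h : u * q * (quotientEndo α L hL u)⁻¹ = q) : u = 1 := by
  have h1 : (quotientEndo α L hL u)⁻¹ * (q⁻¹ * u * q) = 1 := by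
    calc _ = (quotientEndo α L hL u)⁻¹ * ((u * q * (quotientEndo α L hL u)⁻¹)⁻¹ * u * q) := by
          rw [h]
      _ = 1 := by group
  obtain ⟨q, rfl⟩ := QuotientGroup.mk_surjective q
  obtain ⟨u, rfl⟩ := QuotientGroup.mk_surjective u
  exact (QuotientGroup.eq_one_iff u).mpr (hfix u q ((QuotientGroup.eq_one_iff _).mp h1))

theorem reidemeisterNumber_quotientEndo_eq_mul {K L : Subgroup G} [K.Normal] [L.Normal]
    (hKL : K ≤ L) (hc : ⁅(⊤ : Subgroup G), L⁆ ≤ K) (hK : K.map α ≤ K) (hL : L.map α ≤ L)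
    (hfix : reidemeisterNumber (quotientEndo α L hL) ≠ 0 →
      ∀ u q : G, (α u)⁻¹ * (q⁻¹ * u * q) ∈ L → u ∈ L) :
    reidemeisterNumber (quotientEndo α K hK) =
      reidemeisterNumber (quotientEndo α L hL) * reidemeisterNumber (factorEndo α K L hK hL) := by
  let π : G ⧸ K →* G ⧸ L := QuotientGroup.map K L (MonoidHom.id G) hKL
  have hπ : Function.Surjective π := by
    rintro ⟨x⟩
    exact ⟨QuotientGroup.mk x, rfl⟩
  have hπα : ∀ x, π (quotientEndo α K hK x) = quotientEndo α L hL (π x) := by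
    rintro ⟨x⟩
    rfl
  by_cases hR : reidemeisterNumber (quotientEndo α L hL) = 0
  · rw [hR, zero_mul]
    by_contra hne
    exact reidemeisterNumber_ne_zero_of_surjective π hπ hπα hne hR
  let ι : L ⧸ K.subgroupOf L →* G ⧸ K := QuotientGroup.map _ _ L.subtype le_rfl
  refine reidemeisterNumber_eq_mul_of_central_extension ι π ?_ hπ ?_ ?_ ?_ hπα ?_
  · refine (injective_iff_map_eq_one ι).mpr ?_
    rintro ⟨a⟩ ha
    exact (QuotientGroup.eq_one_iff a).mpr ((QuotientGroup.eq_one_iff (a : G)).mp ha)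
  · ext x
    obtain ⟨x, rfl⟩ := QuotientGroup.mk_surjective x
    change (x : G ⧸ L) = 1 ↔ _
    rw [QuotientGroup.eq_one_iff]
    refine ⟨fun hx => ⟨QuotientGroup.mk ⟨x, hx⟩, rfl⟩, ?_⟩
    rintro ⟨a, ha⟩
    obtain ⟨y, rfl⟩ := QuotientGroup.mk_surjective a
    have : (y : G)⁻¹ * x ∈ K := QuotientGroup.eq.mp ha
    simpa using mul_mem y.2 (hKL this)
  · rintro ⟨a⟩ ⟨g⟩
    exact QuotientGroup.eq.mpr (inv_mul_mem_of_commutator_top_le hc a.2 g)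
  · rintro ⟨a⟩
    rfl
  · exact eq_one_of_mul_mul_inv_quotientEndo_eq hL (hfix hR)

open scoped IsMulCommutative in
theorem mem_of_inv_map_mul_mem_of_reidemeisterNumber_ne_zero {K L : Subgroup G}
    [(K.subgroupOf L).Normal] [Group.FG L] (hc : ⁅(⊤ : Subgroup G), L⁆ ≤ K) (hK : K.map α ≤ K)
    (hL : L.map α ≤ L) (htf : ∀ g : L ⧸ K.subgroupOf L, g ≠ 1 → ¬IsOfFinOrder g)
    (hR : reidemeisterNumber (factorEndo α K L hK hL) ≠ 0) {x : G} (hx : x ∈ L)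
    (hαx : (α x)⁻¹ * x ∈ K) : x ∈ K := by
  have : IsMulCommutative (L ⧸ K.subgroupOf L) := ⟨⟨fun a b => by
    obtain ⟨a, rfl⟩ := QuotientGroup.mk_surjective a
    obtain ⟨b, rfl⟩ := QuotientGroup.mk_surjective b
    exact QuotientGroup.eq.mpr (inv_mul_mem_of_commutator_top_le hc a.2 b)⟩⟩
  have : IsMulTorsionFree (L ⧸ K.subgroupOf L) := isMulTorsionFree_iff_not_isOfFinOrder.mpr htf
  have hfixed : factorEndo α K L hK hL (QuotientGroup.mk ⟨x, hx⟩) = QuotientGroup.mk ⟨x, hx⟩ :=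
    QuotientGroup.eq.mpr hαx
  exact mem_subgroupOf.mp <| (QuotientGroup.eq_one_iff (⟨x, hx⟩ : L)).mp <|
    eq_one_of_map_eq_self_of_reidemeisterNumber_ne_zero hR hfixed

theorem mem_of_inv_map_mul_conj_mem {c : ℕ} {s : Fin (c + 1) → Subgroup G} (hmono : Monotone s)
    (htop : s (Fin.last c) = ⊤) (hc : ∀ i : Fin c, ⁅(⊤ : Subgroup G), s i.succ⁆ ≤ s i.castSucc)
    {k : Fin (c + 1)} (hfree : ∀ i : Fin c, k ≤ i.castSucc →
      ∀ x ∈ s i.succ, (α x)⁻¹ * x ∈ s i.castSucc → x ∈ s i.castSucc)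
    {u q : G} (h : (α u)⁻¹ * (q⁻¹ * u * q) ∈ s k) : u ∈ s k := by
  suffices ∀ j, k ≤ j → u ∈ s j from this k le_rfl
  intro j
  induction j using Fin.reverseInduction with
  | last => exact fun _ => htop ▸ mem_top u
  | cast i ih =>
    intro hki
    have hu : u ∈ s i.succ := ih (hki.trans i.castSucc_le_succ)
    refine hfree i hki u hu ?_
    have : (α u)⁻¹ * u = (α u)⁻¹ * (q⁻¹ * u * q) * ⁅q⁻¹, u⁻¹⁆ := by group
    rw [this]
    exact mul_mem (hmono hki h) (hc i (commutator_mem_commutator (mem_top _) (inv_mem hu)))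

variable (α) in
theorem reidemeisterNumber_eq_prod_factorEndo {c : ℕ} (s : Fin (c + 1) → Subgroup G)
    [∀ i, (s i).Normal] (h0 : s 0 = ⊥) (htop : s (Fin.last c) = ⊤) (hmono : Monotone s)
    (hc : ∀ i : Fin c, ⁅(⊤ : Subgroup G), s i.succ⁆ ≤ s i.castSucc) (hα : ∀ i, (s i).map α ≤ s i)
    (hfree : ∀ i : Fin c,
      reidemeisterNumber (factorEndo α _ _ (hα i.castSucc) (hα i.succ)) ≠ 0 →
      ∀ x ∈ s i.succ, (α x)⁻¹ * x ∈ s i.castSucc → x ∈ s i.castSucc) :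
    reidemeisterNumber α =
      ∏ i : Fin c, reidemeisterNumber (factorEndo α _ _ (hα i.castSucc) (hα i.succ)) := by
  set R := fun i : Fin c => reidemeisterNumber (factorEndo α _ _ (hα i.castSucc) (hα i.succ))
  have hquot : ∀ k, reidemeisterNumber (quotientEndo α (s k) (hα k)) =
      ∏ i ∈ Finset.univ.filter (fun i : Fin c => k ≤ i.castSucc), R i := by
    intro k
    induction k using Fin.reverseInduction with
    | last =>
      have : Subsingleton (G ⧸ s (Fin.last c)) := by
        rw [htop]
        exact QuotientGroup.subsingleton_quotient_top
      rw [reidemeisterNumber_of_subsingleton,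
        Finset.filter_false_of_mem (fun i _ => not_le.mpr i.castSucc_lt_last), Finset.prod_empty]
    | cast i ih =>
      have hfilter : Finset.univ.filter (fun j : Fin c => i.castSucc ≤ j.castSucc) =
          insert i (Finset.univ.filter (fun j => i.succ ≤ j.castSucc)) := by
        ext j
        simp [le_iff_eq_or_lt (a := i), eq_comm]
      rw [hfilter, Finset.prod_insert (by simp), mul_comm, ← ih]
      exact reidemeisterNumber_quotientEndo_eq_mul (hmono i.castSucc_le_succ) (hc i) _ _
        fun hR u q hu => mem_of_inv_map_mul_conj_mem hmono htop hc (fun j hj => hfree j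
          (Finset.prod_ne_zero_iff.mp (ih ▸ hR) j (by simpa using hj))) hu
  have hmk : Function.Bijective (QuotientGroup.mk' (s 0)) :=
    ⟨(MonoidHom.ker_eq_bot_iff _).mp (by rw [QuotientGroup.ker_mk', h0]),
      QuotientGroup.mk'_surjective _⟩
  rw [reidemeisterNumber_eq_of_bijective _ hmk (β := quotientEndo α (s 0) (hα 0)) fun x => rfl,
    hquot 0, Finset.filter_true_of_mem fun i _ => Fin.zero_le _]

end CentralSeries

theorem reidemeister_product_formula {N : Type*} [Group N] [Group.FG N] [Group.IsNilpotent N]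
    (α : N →* N) (c : ℕ) (s : Fin (c + 1) → Subgroup N)
    (h0 : s 0 = ⊥) (htop : s (Fin.last c) = ⊤) (hmono : Monotone s)
    (hnorm : ∀ i : Fin (c + 1), (s i).Normal)
    (hcentral : ∀ i : Fin c, ⁅(⊤ : Subgroup N), s i.succ⁆ ≤ s i.castSucc)
    (hα : ∀ i : Fin (c + 1), (s i).map α ≤ s i)
    [inst : ∀ i : Fin c, ((s i.castSucc).subgroupOf (s i.succ)).Normal]
    (htf : ∀ i : Fin c,
      ∀ g : ((s i.succ) ⧸ (s i.castSucc).subgroupOf (s i.succ)), g ≠ 1 → ¬IsOfFinOrder g)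
    (αbar : ∀ i : Fin c,
      ((s i.succ) ⧸ (s i.castSucc).subgroupOf (s i.succ)) →*
        ((s i.succ) ⧸ (s i.castSucc).subgroupOf (s i.succ)))
    (hαbar : ∀ (i : Fin c) (x : s i.succ),
      αbar i (QuotientGroup.mk' _ x) =
        QuotientGroup.mk' _
          (⟨α x, hα i.succ (Subgroup.mem_map_of_mem α x.2)⟩ : s i.succ)) :
    reidemeisterNumber α = ∏ i : Fin c, reidemeisterNumber (αbar i) := by
  have hαbar' : ∀ i, αbar i = factorEndo α _ _ (hα i.castSucc) (hα i.succ) := fun i =>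
    QuotientGroup.monoidHom_ext _ (MonoidHom.ext (hαbar i))
  have hfg : ∀ i, Group.FG (s i) := fun i =>
    (Group.fg_iff_subgroup_fg _).mpr (fg_of_isNilpotent _)
  simp only [hαbar']
  exact reidemeisterNumber_eq_prod_factorEndo α s h0 htop hmono hcentral hα fun i hR _ hx hαx =>
    mem_of_inv_map_mul_mem_of_reidemeisterNumber_ne_zero (hcentral i) _ _ (htf i) hR hx hαx
end

section
/- For the signed permutation action (permuting indices with signs according to cyclic order) on the free abelian group with basis {α_{r,s,t} : 1 ≤ r < s < t ≤ m}, the trace of the transposition (1 2) equals C(m-2,3) - (m-2). -/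
/-- Index set of sorted triples `r < s < t` in `Fin m`. -/
abbrev Triple (m : ℕ) := {t : Fin m × Fin m × Fin m // t.1 < t.2.1 ∧ t.2.1 < t.2.2}

/-- The basis element `α_{a,b,c}` (for `a < b < c`) of the free abelian group
`Triple m → ℤ`. -/
def basisElt {m : ℕ} (a b c : Fin m) (h1 : a < b) (h2 : b < c) : Triple m → ℤ :=
  Pi.single (⟨(a, b, c), h1, h2⟩ : Triple m) 1

/-- `f` acts on the basis as the signed permutation induced by `π`. -/
def IsSignedPermAction {m : ℕ} (π : Equiv.Perm (Fin m))
    (f : (Triple m → ℤ) →+ (Triple m → ℤ)) : Prop :=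
  ∀ (r s t : Fin m) (h1 : r < s) (h2 : s < t),
    (∀ (ha : π r < π s) (hb : π s < π t),
      f (basisElt r s t h1 h2) = basisElt (π r) (π s) (π t) ha hb) ∧
    (∀ (ha : π s < π t) (hb : π t < π r),
      f (basisElt r s t h1 h2) = basisElt (π s) (π t) (π r) ha hb) ∧
    (∀ (ha : π t < π r) (hb : π r < π s),
      f (basisElt r s t h1 h2) = basisElt (π t) (π r) (π s) ha hb) ∧
    (∀ (ha : π r < π t) (hb : π t < π s),
      f (basisElt r s t h1 h2) = - basisElt (π r) (π t) (π s) ha hb) ∧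
    (∀ (ha : π s < π r) (hb : π r < π t),
      f (basisElt r s t h1 h2) = - basisElt (π s) (π r) (π t) ha hb) ∧
    (∀ (ha : π t < π s) (hb : π s < π r),
      f (basisElt r s t h1 h2) = - basisElt (π t) (π s) (π r) ha hb)


section Aux
open Finset

lemma L1 (n : ℕ) : ∑ i ∈ range n, (if 2 ≤ i then (1:ℤ) else 0) = ((n - 2 : ℕ) : ℤ) := by
  induction n with
  | zero => simp
  | succ n ih =>
    rw [sum_range_succ, ih]
    by_cases h : 2 ≤ n
    · rw [if_pos h]; push_cast [Nat.succ_sub h] at *; omega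
    · rw [if_neg h]
      have : n - 2 = 0 := by omega
      have : n + 1 - 2 = 0 := by omega
      simp_all

lemma L2 (n : ℕ) : ∑ i ∈ range n, ∑ j ∈ range n, (if 2 ≤ i ∧ i < j then (1:ℤ) else 0)
    = (Nat.choose (n - 2) 2 : ℤ) := by
  induction n with
  | zero => simp
  | succ n ih =>
    have trim : ∀ i ∈ range (n+1), ∑ j ∈ range (n+1), (if 2 ≤ i ∧ i < j then (1:ℤ) else 0)
        = ∑ j ∈ range n, (if 2 ≤ i ∧ i < j then (1:ℤ) else 0) + (if 2 ≤ i ∧ i < n then 1 else 0) := by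
      intro i _; rw [sum_range_succ]
    rw [sum_congr rfl trim, sum_add_distrib, sum_range_succ, sum_range_succ]
    have h1 : ∑ j ∈ range n, (if 2 ≤ n ∧ n < j then (1:ℤ) else 0) = 0 :=
      sum_eq_zero (fun j hj => by rw [mem_range] at hj; rw [if_neg (by omega)])
    have h2 : (if 2 ≤ n ∧ n < n then (1:ℤ) else 0) = 0 := by rw [if_neg (by omega)]
    have h3 : ∑ i ∈ range n, (if 2 ≤ i ∧ i < n then (1:ℤ) else 0)
        = ∑ i ∈ range n, (if 2 ≤ i then (1:ℤ) else 0) :=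
      sum_congr rfl (fun i hi => by rw [mem_range] at hi; exact if_congr (by omega) rfl rfl)
    rw [h1, h2, h3, ih, L1]
    rcases Nat.lt_or_ge n 2 with h | h
    · interval_cases n <;> simp [Nat.choose]
    · obtain ⟨k, rfl⟩ := Nat.exists_eq_add_of_le h
      have e1 : 2 + k - 2 = k := by omega
      have e2 : 2 + k + 1 - 2 = k + 1 := by omega
      rw [e1, e2, Nat.choose_succ_succ k 1]
      push_cast [Nat.choose_one_right]
      ring

lemma L3 (n : ℕ) : ∑ k ∈ range n, ∑ i ∈ range n, ∑ j ∈ range n,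
      (if 2 ≤ i ∧ i < j ∧ j < k then (1:ℤ) else 0)
    = (Nat.choose (n - 2) 3 : ℤ) := by
  induction n with
  | zero => simp
  | succ n ih =>
    have trim : ∀ k, k ≤ n →
        (∑ i ∈ range (n+1), ∑ j ∈ range (n+1), (if 2 ≤ i ∧ i < j ∧ j < k then (1:ℤ) else 0))
        = ∑ i ∈ range n, ∑ j ∈ range n, (if 2 ≤ i ∧ i < j ∧ j < k then (1:ℤ) else 0) := by
      intro k hk
      rw [sum_range_succ]
      have hlast : ∑ j ∈ range (n+1), (if 2 ≤ n ∧ n < j ∧ j < k then (1:ℤ) else 0) = 0 :=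
        sum_eq_zero (fun j hj => by rw [mem_range] at hj; rw [if_neg (by omega)])
      rw [hlast, add_zero]
      refine sum_congr rfl (fun i hi => ?_)
      rw [sum_range_succ, if_neg (by omega), add_zero]
    rw [sum_range_succ]
    have h1 : ∑ k ∈ range n, ∑ i ∈ range (n+1), ∑ j ∈ range (n+1),
        (if 2 ≤ i ∧ i < j ∧ j < k then (1:ℤ) else 0)
        = ∑ k ∈ range n, ∑ i ∈ range n, ∑ j ∈ range n,
        (if 2 ≤ i ∧ i < j ∧ j < k then (1:ℤ) else 0) :=
      sum_congr rfl (fun k hk => trim k (by rw [mem_range] at hk; omega))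
    rw [h1, ih, trim n le_rfl]
    have h2 : ∑ i ∈ range n, ∑ j ∈ range n, (if 2 ≤ i ∧ i < j ∧ j < n then (1:ℤ) else 0)
        = ∑ i ∈ range n, ∑ j ∈ range n, (if 2 ≤ i ∧ i < j then (1:ℤ) else 0) := by
      refine sum_congr rfl (fun i _ => sum_congr rfl (fun j hj => ?_))
      rw [mem_range] at hj; exact if_congr (by omega) rfl rfl
    rw [h2, L2]
    rcases Nat.lt_or_ge n 3 with h | h
    · interval_cases n <;> simp [Nat.choose]
    · obtain ⟨k, rfl⟩ := Nat.exists_eq_add_of_le h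
      have e1 : 3 + k - 2 = k + 1 := by omega
      have e2 : 3 + k + 1 - 2 = k + 2 := by omega
      rw [e1, e2, Nat.choose_succ_succ (k+1) 2]
      push_cast
      ring

lemma L3' (n : ℕ) : ∑ i ∈ range n, ∑ j ∈ range n, ∑ k ∈ range n,
      (if 2 ≤ i ∧ i < j ∧ j < k then (1:ℤ) else 0)
    = (Nat.choose (n - 2) 3 : ℤ) := by
  rw [← L3 n]
  calc ∑ i ∈ range n, ∑ j ∈ range n, ∑ k ∈ range n,
        (if 2 ≤ i ∧ i < j ∧ j < k then (1:ℤ) else 0)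
      = ∑ i ∈ range n, ∑ k ∈ range n, ∑ j ∈ range n,
        (if 2 ≤ i ∧ i < j ∧ j < k then (1:ℤ) else 0) :=
        sum_congr rfl (fun i _ => sum_comm)
    _ = ∑ k ∈ range n, ∑ i ∈ range n, ∑ j ∈ range n,
        (if 2 ≤ i ∧ i < j ∧ j < k then (1:ℤ) else 0) := sum_comm

lemma P2sum (m : ℕ) (hm : 2 ≤ m) : ∑ i ∈ range m, ∑ j ∈ range m, ∑ k ∈ range m,
    (if i = 0 ∧ j = 1 ∧ 1 < k then (1:ℤ) else 0) = ((m - 2 : ℕ) : ℤ) := by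
  have e : ∀ i j k : ℕ, (if i = 0 ∧ j = 1 ∧ 1 < k then (1:ℤ) else 0)
      = if i = 0 then (if j = 1 then (if 2 ≤ k then (1:ℤ) else 0) else 0) else 0 := by
    intro i j k; split_ifs <;> omega
  simp only [e]
  rw [Finset.sum_eq_single_of_mem 0 (mem_range.2 (by omega))
    (fun b _ hb => sum_eq_zero fun _ _ => sum_eq_zero fun _ _ => if_neg hb)]
  simp only [if_pos rfl, if_true]
  rw [Finset.sum_eq_single_of_mem 1 (mem_range.2 (by omega))
    (fun b _ hb => sum_eq_zero fun _ _ => if_neg hb)]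
  simp only [if_pos rfl, if_true]
  exact L1 m

lemma count_main (m : ℕ) (hm : 2 ≤ m) :
    ∑ a : Fin m, ∑ b : Fin m, ∑ c : Fin m,
      (if a < b ∧ b < c then
        ((if 2 ≤ a.val then (1:ℤ) else 0) - (if a.val = 0 ∧ b.val = 1 then 1 else 0))
      else 0)
    = (Nat.choose (m - 2) 3 : ℤ) - ((m : ℤ) - 2) := by
  simp only [Fin.lt_def]
  rw [Fin.sum_univ_eq_sum_range (fun i => ∑ b : Fin m, ∑ c : Fin m,
      (if i < b.val ∧ b.val < c.val then
        ((if 2 ≤ i then (1:ℤ) else 0) - (if i = 0 ∧ b.val = 1 then 1 else 0)) else 0)) m]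
  have e1 : ∀ i ∈ range m, (∑ b : Fin m, ∑ c : Fin m,
      (if i < b.val ∧ b.val < c.val then
        ((if 2 ≤ i then (1:ℤ) else 0) - (if i = 0 ∧ b.val = 1 then 1 else 0)) else 0))
      = ∑ j ∈ range m, ∑ c : Fin m,
      (if i < j ∧ j < c.val then
        ((if 2 ≤ i then (1:ℤ) else 0) - (if i = 0 ∧ j = 1 then 1 else 0)) else 0) := by
    intro i _
    exact Fin.sum_univ_eq_sum_range (fun j => ∑ c : Fin m,
      (if i < j ∧ j < c.val then
        ((if 2 ≤ i then (1:ℤ) else 0) - (if i = 0 ∧ j = 1 then 1 else 0)) else 0)) m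
  rw [sum_congr rfl e1]
  have e2 : ∀ i ∈ range m, ∀ j ∈ range m, (∑ c : Fin m,
      (if i < j ∧ j < c.val then
        ((if 2 ≤ i then (1:ℤ) else 0) - (if i = 0 ∧ j = 1 then 1 else 0)) else 0))
      = ∑ k ∈ range m,
      (if i < j ∧ j < k then
        ((if 2 ≤ i then (1:ℤ) else 0) - (if i = 0 ∧ j = 1 then 1 else 0)) else 0) := by
    intro i _ j _
    exact Fin.sum_univ_eq_sum_range (fun k =>
      (if i < j ∧ j < k then
        ((if 2 ≤ i then (1:ℤ) else 0) - (if i = 0 ∧ j = 1 then 1 else 0)) else 0)) m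
  rw [sum_congr rfl (fun i hi => sum_congr rfl (e2 i hi))]
  have split : ∀ i j k : ℕ,
      (if i < j ∧ j < k then
        ((if 2 ≤ i then (1:ℤ) else 0) - (if i = 0 ∧ j = 1 then 1 else 0)) else 0)
      = (if 2 ≤ i ∧ i < j ∧ j < k then (1:ℤ) else 0)
        - (if i = 0 ∧ j = 1 ∧ 1 < k then (1:ℤ) else 0) := by
    intro i j k; split_ifs <;> omega
  simp only [split, Finset.sum_sub_distrib]
  rw [L3', P2sum m hm]
  congr 1
  omega

end Aux

lemma basisElt_congr {m : ℕ} {a b c a' b' c' : Fin m} (ea : a = a') (eb : b = b') (ec : c = c')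
    {h1 : a < b} {h2 : b < c} {h1' : a' < b'} {h2' : b' < c'} :
    basisElt a b c h1 h2 = basisElt a' b' c' h1' h2' := by subst ea eb ec; rfl

lemma diag_val {m : ℕ} (h0 : 0 < m) (h1m : 1 < m)
    (f : (Triple m → ℤ) →+ (Triple m → ℤ))
    (hf : IsSignedPermAction (Equiv.swap (⟨0, h0⟩ : Fin m) ⟨1, h1m⟩) f)
    (a b c : Fin m) (h1 : a < b) (h2 : b < c) :
    f (basisElt a b c h1 h2) ⟨(a, b, c), h1, h2⟩ =
      (if 2 ≤ a.val then (1:ℤ) else 0) - (if a.val = 0 ∧ b.val = 1 then 1 else 0) := by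
  have hab : a.val < b.val := h1
  have hbc : b.val < c.val := h2
  rcases Nat.lt_or_ge a.val 2 with hA | hA
  · rcases Nat.eq_or_lt_of_le (Nat.zero_le a.val) with hA0 | hA1
    · -- a.val = 0
      have ha0 : a = ⟨0, h0⟩ := Fin.ext hA0.symm
      rcases Nat.eq_or_lt_of_le (show 1 ≤ b.val by omega) with hB1 | hB2
      · -- b.val = 1 : value -1
        have hb1 : b = ⟨1, h1m⟩ := Fin.ext hB1.symm
        have e1 : Equiv.swap (⟨0, h0⟩ : Fin m) ⟨1, h1m⟩ a = ⟨1, h1m⟩ := by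
          rw [ha0]; exact Equiv.swap_apply_left _ _
        have e2 : Equiv.swap (⟨0, h0⟩ : Fin m) ⟨1, h1m⟩ b = ⟨0, h0⟩ := by
          rw [hb1]; exact Equiv.swap_apply_right _ _
        have e3 : Equiv.swap (⟨0, h0⟩ : Fin m) ⟨1, h1m⟩ c = c :=
          Equiv.swap_apply_of_ne_of_ne (Fin.ne_of_val_ne (by simp; omega))
            (Fin.ne_of_val_ne (by simp; omega))
        have key := (hf a b c h1 h2).2.2.2.2.1
          (by rw [e1, e2, Fin.lt_def]; simp)
          (by rw [e1, e3, Fin.lt_def]; simp; omega)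
        rw [key, basisElt_congr (e2.trans ha0.symm) (e1.trans hb1.symm) e3
          (h1' := h1) (h2' := h2)]
        rw [if_neg (by omega), if_pos ⟨hA0.symm, hB1.symm⟩]
        simp [basisElt, Pi.single_eq_same]
      · -- b.val ≥ 2 : value 0
        have e1 : Equiv.swap (⟨0, h0⟩ : Fin m) ⟨1, h1m⟩ a = ⟨1, h1m⟩ := by
          rw [ha0]; exact Equiv.swap_apply_left _ _
        have e2 : Equiv.swap (⟨0, h0⟩ : Fin m) ⟨1, h1m⟩ b = b :=
          Equiv.swap_apply_of_ne_of_ne (Fin.ne_of_val_ne (by simp; omega))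
            (Fin.ne_of_val_ne (by simp; omega))
        have e3 : Equiv.swap (⟨0, h0⟩ : Fin m) ⟨1, h1m⟩ c = c :=
          Equiv.swap_apply_of_ne_of_ne (Fin.ne_of_val_ne (by simp; omega))
            (Fin.ne_of_val_ne (by simp; omega))
        have ha : Equiv.swap (⟨0, h0⟩ : Fin m) ⟨1, h1m⟩ a <
            Equiv.swap (⟨0, h0⟩ : Fin m) ⟨1, h1m⟩ b := by
          rw [e1, e2, Fin.lt_def]; simp; omega
        have hb : Equiv.swap (⟨0, h0⟩ : Fin m) ⟨1, h1m⟩ b <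
            Equiv.swap (⟨0, h0⟩ : Fin m) ⟨1, h1m⟩ c := by rw [e2, e3]; exact h2
        have key := (hf a b c h1 h2).1 ha hb
        rw [key, if_neg (by omega), if_neg (by omega),
          basisElt_congr e1 e2 e3 (h1' := by rw [← e1, ← e2]; exact ha)
            (h2' := by rw [← e2, ← e3]; exact hb),
          basisElt, Pi.single_eq_of_ne, sub_zero]
        intro h
        have := congrArg (fun t : Triple m => t.val.1.val) h
        simp at this
        omega
    · -- a.val = 1 : value 0
      have ha1 : a = ⟨1, h1m⟩ := Fin.ext (by simp; omega)
      have hA1' : a.val = 1 := by omega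
      have e1 : Equiv.swap (⟨0, h0⟩ : Fin m) ⟨1, h1m⟩ a = ⟨0, h0⟩ := by
        rw [ha1]; exact Equiv.swap_apply_right _ _
      have e2 : Equiv.swap (⟨0, h0⟩ : Fin m) ⟨1, h1m⟩ b = b :=
        Equiv.swap_apply_of_ne_of_ne (Fin.ne_of_val_ne (by simp; omega))
          (Fin.ne_of_val_ne (by simp; omega))
      have e3 : Equiv.swap (⟨0, h0⟩ : Fin m) ⟨1, h1m⟩ c = c :=
        Equiv.swap_apply_of_ne_of_ne (Fin.ne_of_val_ne (by simp; omega))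
          (Fin.ne_of_val_ne (by simp; omega))
      have ha : Equiv.swap (⟨0, h0⟩ : Fin m) ⟨1, h1m⟩ a <
          Equiv.swap (⟨0, h0⟩ : Fin m) ⟨1, h1m⟩ b := by
        rw [e1, e2, Fin.lt_def]; simp; omega
      have hb : Equiv.swap (⟨0, h0⟩ : Fin m) ⟨1, h1m⟩ b <
          Equiv.swap (⟨0, h0⟩ : Fin m) ⟨1, h1m⟩ c := by rw [e2, e3]; exact h2
      have key := (hf a b c h1 h2).1 ha hb
      rw [key, if_neg (by omega), if_neg (by omega),
        basisElt_congr e1 e2 e3 (h1' := by rw [← e1, ← e2]; exact ha)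
          (h2' := by rw [← e2, ← e3]; exact hb),
        basisElt, Pi.single_eq_of_ne, sub_zero]
      intro h
      have := congrArg (fun t : Triple m => t.val.1.val) h
      simp at this
      omega
  · -- a.val ≥ 2 : value 1
    have e1 : Equiv.swap (⟨0, h0⟩ : Fin m) ⟨1, h1m⟩ a = a :=
      Equiv.swap_apply_of_ne_of_ne (Fin.ne_of_val_ne (by simp; omega))
        (Fin.ne_of_val_ne (by simp; omega))
    have e2 : Equiv.swap (⟨0, h0⟩ : Fin m) ⟨1, h1m⟩ b = b :=
      Equiv.swap_apply_of_ne_of_ne (Fin.ne_of_val_ne (by simp; omega))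
        (Fin.ne_of_val_ne (by simp; omega))
    have e3 : Equiv.swap (⟨0, h0⟩ : Fin m) ⟨1, h1m⟩ c = c :=
      Equiv.swap_apply_of_ne_of_ne (Fin.ne_of_val_ne (by simp; omega))
        (Fin.ne_of_val_ne (by simp; omega))
    have ha : Equiv.swap (⟨0, h0⟩ : Fin m) ⟨1, h1m⟩ a <
        Equiv.swap (⟨0, h0⟩ : Fin m) ⟨1, h1m⟩ b := by rw [e1, e2]; exact h1
    have hb : Equiv.swap (⟨0, h0⟩ : Fin m) ⟨1, h1m⟩ b <
        Equiv.swap (⟨0, h0⟩ : Fin m) ⟨1, h1m⟩ c := by rw [e2, e3]; exact h2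
    have key := (hf a b c h1 h2).1 ha hb
    rw [key, basisElt_congr e1 e2 e3 (h1' := h1) (h2' := h2),
      if_pos hA, if_neg (by omega)]
    simp [basisElt, Pi.single_eq_same]

theorem trace_transposition (m : ℕ) (hm : 2 ≤ m)
    (f : (Triple m → ℤ) →+ (Triple m → ℤ))
    (hf : IsSignedPermAction (Equiv.swap (⟨0, by omega⟩ : Fin m) ⟨1, by omega⟩) f) :
    ∑ t : Triple m, f (Pi.single t 1) t =
      (Nat.choose (m - 2) 3 : ℤ) - ((m : ℤ) - 2) := by
  have h0 : 0 < m := by omega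
  have h1m : 1 < m := by omega
  have step1 : ∀ t : Triple m, f (Pi.single t 1) t =
      (if 2 ≤ t.val.1.val then (1:ℤ) else 0) -
        (if t.val.1.val = 0 ∧ t.val.2.1.val = 1 then 1 else 0) := by
    rintro ⟨⟨a, b, c⟩, hab, hbc⟩
    exact diag_val h0 h1m f hf a b c hab hbc
  rw [Finset.sum_congr rfl (fun t _ => step1 t)]
  rw [← count_main m hm]
  rw [← Finset.sum_subtype (Finset.univ.filter
      (fun x : Fin m × Fin m × Fin m => x.1 < x.2.1 ∧ x.2.1 < x.2.2))
      (fun x => by simp) (fun x : Fin m × Fin m × Fin m =>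
        (if 2 ≤ x.1.val then (1:ℤ) else 0) -
          (if x.1.val = 0 ∧ x.2.1.val = 1 then 1 else 0))]
  rw [Finset.sum_filter, Fintype.sum_prod_type]
  refine Finset.sum_congr rfl (fun a _ => ?_)
  rw [Fintype.sum_prod_type]
end

section
/- For every partition μ of n (n ≥ 6) with m = lcm of its parts, there exists a standard Young tableau T of shape λ = (n-3,1,1,1) whose μ-index ind_μ(T) = Σ_{k ∈ D(T)} b_μ(k) is congruent to 0 mod m. -/
/-- The hook Young diagram of shape `(n-3, 1, 1, 1)` (for `n ≥ 4`). -/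
def hookDiagram (n : ℕ) (hn : 4 ≤ n) : YoungDiagram :=
  YoungDiagram.ofRowLens [n - 3, 1, 1, 1] (by simp [List.sortedGE_iff_pairwise]; omega)

/-- `T` is a standard Young tableau of shape `μ` with entries `1, …, n`. -/
def IsStandard (μ : YoungDiagram) (n : ℕ) (T : ℕ × ℕ → ℕ) : Prop :=
  Set.BijOn T (μ.cells : Set (ℕ × ℕ)) (Set.Icc 1 n) ∧
  (∀ i j : ℕ, (i, j + 1) ∈ μ → T (i, j) < T (i, j + 1)) ∧
  (∀ i j : ℕ, (i + 1, j) ∈ μ → T (i, j) < T (i + 1, j))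

/-- The descent set of a tableau. -/
def descentSet (μ : YoungDiagram) (T : ℕ × ℕ → ℕ) : Set ℕ :=
  {k | ∃ c ∈ μ.cells, ∃ c' ∈ μ.cells, T c = k ∧ T c' = k + 1 ∧ c.1 < c'.1}

/-- The lcm of the parts of a partition given as a list. -/
def partLcm (L : List ℕ) : ℕ := L.foldr Nat.lcm 1

/-- The tuple `b_μ` associated to a partition `μ = L` (0-indexed). -/
def bSeq (L : List ℕ) : List ℕ :=
  L.flatMap fun p => (List.range p).map fun i => (i + 1) * partLcm L / p

/-!
Every `3`-subset `{i, j, k}` of `{1, …, n - 1}` is the descent set of a standard tableau of hook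
shape `(n - 3, 1, 1, 1)`: put `i + 1, j + 1, k + 1` in the leg and the other numbers in the arm.
So it suffices to find three positions whose `b_μ`-values add up to a multiple of `m`. Inside
the block of a part `p`, the values are `(t + 1) · m / p`. If the largest part `p` is at least
`3`, the positions `1, p - 1, p` give `2m` (for `μ = (n)` take `1, 2, n - 3`, giving `m`).
Otherwise all parts are at most `2`: for `μ = (2, 2, …)` the first three values are
`m / 2, m, m / 2`, and in every other case the first part is followed by two parts `1`, so the
last positions of the first three blocks all carry the value `m`.
-/

open Set

section HookDiagram

variable {n : ℕ} (hn : 4 ≤ n)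

lemma mem_hookDiagram {i j : ℕ} :
    (i, j) ∈ hookDiagram n hn ↔ (i = 0 ∧ j < n - 3) ∨ (1 ≤ i ∧ i ≤ 3 ∧ j = 0) := by
  rw [hookDiagram, YoungDiagram.mem_ofRowLens]
  rcases i with _ | _ | _ | _ | i <;> simp

lemma arm_mem_hookDiagram {j : ℕ} (hj : j < n - 3) : (0, j) ∈ hookDiagram n hn :=
  (mem_hookDiagram hn).2 (Or.inl ⟨rfl, hj⟩)

lemma leg_mem_hookDiagram {r : ℕ} (h1 : 1 ≤ r) (h3 : r ≤ 3) : (r, 0) ∈ hookDiagram n hn :=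
  (mem_hookDiagram hn).2 (Or.inr ⟨h1, h3, rfl⟩)

theorem IsStandard.descentSet_hookDiagram {T : ℕ × ℕ → ℕ}
    (hT : IsStandard (hookDiagram n hn) n T) :
    descentSet (hookDiagram n hn) T = {k | ∃ r, 1 ≤ r ∧ r ≤ 3 ∧ T (r, 0) = k + 1} := by
  obtain ⟨⟨hmaps, -, hsurj⟩, -, hcol⟩ := hT
  have h01 : T (0, 0) < T (1, 0) := hcol 0 0 (leg_mem_hookDiagram hn le_rfl (by norm_num))
  have h12 : T (1, 0) < T (2, 0) := hcol 1 0 (leg_mem_hookDiagram hn (by norm_num) (by norm_num))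
  have h23 : T (2, 0) < T (3, 0) := hcol 2 0 (leg_mem_hookDiagram hn (by norm_num) le_rfl)
  have h0 : 1 ≤ T (0, 0) := (hmaps (arm_mem_hookDiagram hn (by omega))).1
  ext k
  constructor
  · rintro ⟨c, -, ⟨r, s⟩, hc', -, hk, hlt⟩
    obtain ⟨rfl, -⟩ | ⟨h1, h3, rfl⟩ := (mem_hookDiagram hn).1 hc'
    · exact absurd hlt (Nat.not_lt_zero _)
    · exact ⟨r, h1, h3, hk⟩
  · rintro ⟨r, h1, h3, hk⟩
    have hk1 : 1 ≤ k := by interval_cases r <;> omega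
    have hkn : k ≤ n := by have := (hmaps (leg_mem_hookDiagram hn h1 h3)).2; omega
    obtain ⟨⟨i, j⟩, hc, hTc⟩ := hsurj ⟨hk1, hkn⟩
    refine ⟨(i, j), hc, (r, 0), leg_mem_hookDiagram hn h1 h3, hTc, hk, ?_⟩
    obtain ⟨rfl, -⟩ | ⟨hi1, hi3, rfl⟩ := (mem_hookDiagram hn).1 hc
    · exact h1
    · show i < r
      interval_cases i <;> interval_cases r <;> omega

end HookDiagram

/-- The arm of the hook tableau with leg `a < b < c` lists `{1, …, n} \ {a, b, c}` in increasing
order. -/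
def armEntry (a b c j : ℕ) : ℕ :=
  if j + 1 < a then j + 1 else if j + 2 < b then j + 2 else if j + 3 < c then j + 3 else j + 4

def hookTableau (a b c : ℕ) : ℕ × ℕ → ℕ
  | (0, j) => armEntry a b c j
  | (1, 0) => a
  | (2, 0) => b
  | (3, 0) => c
  | _ => 0

section HookTableau

variable {a b c n : ℕ}

lemma armEntry_strictMono : StrictMono (armEntry a b c) :=
  fun s t hst => by unfold armEntry; split_ifs <;> omega

lemma armEntry_ne (hab : a < b) (hbc : b < c) (j : ℕ) :
    armEntry a b c j ≠ a ∧ armEntry a b c j ≠ b ∧ armEntry a b c j ≠ c := by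
  unfold armEntry; split_ifs <;> omega

lemma exists_armEntry_eq (ha : 1 ≤ a) (hab : a < b) (hbc : b < c) (hc : c ≤ n) {v : ℕ}
    (hv : v ∈ Icc 1 n) (hva : v ≠ a) (hvb : v ≠ b) (hvc : v ≠ c) :
    ∃ j < n - 3, armEntry a b c j = v := by
  obtain ⟨hv1, hvn⟩ := hv
  refine ⟨(if v < a then v else if v < b then v - 1 else if v < c then v - 2 else v - 3) - 1,
    by split_ifs <;> omega, ?_⟩
  unfold armEntry; split_ifs <;> omega

variable (ha : 2 ≤ a) (hab : a < b) (hbc : b < c) (hc : c ≤ n)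
include ha hab hbc hc

lemma hookTableau_mapsTo :
    MapsTo (hookTableau a b c) (hookDiagram n (by omega)).cells (Icc 1 n) := by
  rintro ⟨i, j⟩ h
  obtain ⟨rfl, hj⟩ | ⟨hi1, hi3, rfl⟩ := (mem_hookDiagram _).1 h
  · simp only [hookTableau, armEntry, mem_Icc]; split_ifs <;> omega
  · interval_cases i <;> simp only [hookTableau, mem_Icc] <;> omega

lemma hookTableau_injOn : InjOn (hookTableau a b c) (hookDiagram n (by omega)).cells := by
  rintro ⟨i, j⟩ h ⟨i', j'⟩ h' heq
  obtain ⟨rfl, -⟩ | ⟨hi1, hi3, rfl⟩ := (mem_hookDiagram _).1 h <;>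
    obtain ⟨rfl, -⟩ | ⟨hi1', hi3', rfl⟩ := (mem_hookDiagram _).1 h'
  · rw [armEntry_strictMono.injective heq]
  · have := armEntry_ne hab hbc j
    interval_cases i' <;> simp only [hookTableau] at heq <;> omega
  · have := armEntry_ne hab hbc j'
    interval_cases i <;> simp only [hookTableau] at heq <;> omega
  · interval_cases i <;> interval_cases i' <;> simp only [hookTableau] at heq ⊢ <;> omega

lemma hookTableau_surjOn :
    SurjOn (hookTableau a b c) (hookDiagram n (by omega)).cells (Icc 1 n) := by
  intro v hv
  by_cases hva : v = a
  · exact ⟨(1, 0), leg_mem_hookDiagram _ le_rfl (by norm_num), hva.symm⟩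
  by_cases hvb : v = b
  · exact ⟨(2, 0), leg_mem_hookDiagram _ (by norm_num) (by norm_num), hvb.symm⟩
  by_cases hvc : v = c
  · exact ⟨(3, 0), leg_mem_hookDiagram _ (by norm_num) le_rfl, hvc.symm⟩
  obtain ⟨j, hj, rfl⟩ := exists_armEntry_eq (by omega) hab hbc hc hv hva hvb hvc
  exact ⟨(0, j), arm_mem_hookDiagram _ hj, rfl⟩

lemma isStandard_hookTableau : IsStandard (hookDiagram n (by omega)) n (hookTableau a b c) := by
  refine ⟨⟨hookTableau_mapsTo ha hab hbc hc, hookTableau_injOn ha hab hbc hc,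
    hookTableau_surjOn ha hab hbc hc⟩, fun i j h => ?_, fun i j h => ?_⟩
  · obtain ⟨rfl, -⟩ | ⟨-, -, h0⟩ := (mem_hookDiagram _).1 h
    · exact armEntry_strictMono (Nat.lt_succ_self j)
    · omega
  · obtain ⟨h0, -⟩ | ⟨-, hi, rfl⟩ := (mem_hookDiagram _).1 h
    · omega
    · have hi2 : i ≤ 2 := by omega
      interval_cases i
      · simp only [hookTableau, armEntry]; split_ifs <;> omega
      · exact hab
      · exact hbc

lemma descentSet_hookTableau :
    descentSet (hookDiagram n (by omega)) (hookTableau a b c) = {a - 1, b - 1, c - 1} := by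
  rw [(isStandard_hookTableau ha hab hbc hc).descentSet_hookDiagram]
  ext k
  constructor
  · rintro ⟨r, h1, h3, hr⟩
    interval_cases r <;> simp only [hookTableau] at hr <;> simp only [mem_insert_iff,
      mem_singleton_iff] <;> omega
  · rintro (rfl | rfl | rfl)
    exacts [⟨1, le_rfl, by norm_num, by simp only [hookTableau]; omega⟩,
      ⟨2, by norm_num, by norm_num, by simp only [hookTableau]; omega⟩,
      ⟨3, by norm_num, le_rfl, by simp only [hookTableau]; omega⟩]

end HookTableau

theorem exists_isStandard_descentSet_hookDiagram_eq {n i j k : ℕ} (hi : 1 ≤ i) (hij : i < j)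
    (hjk : j < k) (hk : k < n) :
    ∃ T, IsStandard (hookDiagram n (by omega)) n T ∧
      descentSet (hookDiagram n (by omega)) T = {i, j, k} := by
  have hij' : i + 1 < j + 1 := by omega
  have hjk' : j + 1 < k + 1 := by omega
  refine ⟨hookTableau (i + 1) (j + 1) (k + 1),
    isStandard_hookTableau (by omega) hij' hjk' hk, ?_⟩
  rw [descentSet_hookTableau (by omega) hij' hjk' hk]
  simp only [Nat.add_sub_cancel]

lemma dvd_partLcm {p : ℕ} {L : List ℕ} (h : p ∈ L) : p ∣ partLcm L := by
  induction L with
  | nil => simp at h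
  | cons x xs ih =>
    rcases List.mem_cons.mp h with rfl | h
    · exact Nat.dvd_lcm_left _ _
    · exact (ih h).trans (Nat.dvd_lcm_right _ _)

/-- `b_μ` with the modulus decoupled from the parts, so that parts can be peeled off one at a
time. -/
def bTuple (m : ℕ) (L : List ℕ) : List ℕ :=
  L.flatMap fun p => (List.range p).map fun i => (i + 1) * m / p

lemma bSeq_eq_bTuple (L : List ℕ) : bSeq L = bTuple (partLcm L) L := rfl

section BTuple

variable {m p t : ℕ} (L : List ℕ)

lemma bTuple_cons_getD_of_lt (hpm : p ∣ m) (ht : t < p) :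
    (bTuple m (p :: L)).getD t 0 = (t + 1) * (m / p) := by
  rw [bTuple, List.flatMap_cons, List.getD_append _ _ _ t (by simpa using ht),
    List.getD_eq_getElem _ _ (by simpa using ht)]
  simp [Nat.mul_div_assoc _ hpm]

lemma bTuple_cons_getD_of_le (ht : p ≤ t) :
    (bTuple m (p :: L)).getD t 0 = (bTuple m L).getD (t - p) 0 := by
  rw [bTuple, List.flatMap_cons, List.getD_append_right _ _ _ _ (by simpa using ht)]
  simp [bTuple]

lemma bTuple_cons_getD_pred (hpm : p ∣ m) (hp : 0 < p) :
    (bTuple m (p :: L)).getD (p - 1) 0 = m := by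
  rw [bTuple_cons_getD_of_lt L hpm (by omega), Nat.sub_add_cancel hp, Nat.mul_div_cancel' hpm]

variable {i j k : ℕ}

lemma bTuple_cons_sum_modEq_zero (hpm : p ∣ m) (hi : i < p) (hj : j < p) (hk : k < p)
    (hp : p ∣ i + j + k + 3) :
    (bTuple m (p :: L)).getD i 0 + (bTuple m (p :: L)).getD j 0 + (bTuple m (p :: L)).getD k 0
      ≡ 0 [MOD m] := by
  obtain ⟨e, he⟩ := hp
  rw [bTuple_cons_getD_of_lt L hpm hi, bTuple_cons_getD_of_lt L hpm hj,
    bTuple_cons_getD_of_lt L hpm hk, ← add_mul, ← add_mul,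
    show i + 1 + (j + 1) + (k + 1) = p * e by omega, mul_comm p, mul_assoc,
    Nat.mul_div_cancel' hpm]
  exact Nat.modEq_zero_iff_dvd.2 (dvd_mul_left m e)

lemma bTuple_two_two_sum_modEq_zero (hm : 2 ∣ m) :
    (bTuple m (2 :: 2 :: L)).getD 0 0 + (bTuple m (2 :: 2 :: L)).getD 1 0
      + (bTuple m (2 :: 2 :: L)).getD 2 0 ≡ 0 [MOD m] := by
  rw [bTuple_cons_getD_of_lt _ hm (by norm_num), bTuple_cons_getD_of_lt _ hm (by norm_num),
    bTuple_cons_getD_of_le _ le_rfl, Nat.sub_self, bTuple_cons_getD_of_lt _ hm (by norm_num)]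
  obtain ⟨e, rfl⟩ := hm
  rw [Nat.mul_div_cancel_left e two_pos]
  exact Nat.modEq_zero_iff_dvd.2 ⟨2, by ring⟩

lemma bTuple_cons_one_one_sum_modEq_zero (hpm : p ∣ m) (hp : 0 < p) :
    (bTuple m (p :: 1 :: 1 :: L)).getD (p - 1) 0 + (bTuple m (p :: 1 :: 1 :: L)).getD p 0
      + (bTuple m (p :: 1 :: 1 :: L)).getD (p + 1) 0 ≡ 0 [MOD m] := by
  have h1 : (bTuple m (1 :: 1 :: L)).getD 0 0 = m := bTuple_cons_getD_pred _ (one_dvd m) one_pos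
  have h2 : (bTuple m (1 :: L)).getD 0 0 = m := bTuple_cons_getD_pred _ (one_dvd m) one_pos
  rw [bTuple_cons_getD_pred _ hpm hp, bTuple_cons_getD_of_le _ le_rfl, Nat.sub_self, h1,
    bTuple_cons_getD_of_le _ (by omega), Nat.add_sub_cancel_left,
    bTuple_cons_getD_of_le _ le_rfl, Nat.sub_self, h2]
  exact Nat.modEq_zero_iff_dvd.2 ⟨3, by ring⟩

end BTuple

theorem exists_bTuple_sum_modEq_zero {n m : ℕ} (hn : 6 ≤ n) {L : List ℕ}
    (hpos : ∀ p ∈ L, 0 < p) (hsorted : L.Pairwise (· ≥ ·)) (hsum : L.sum = n)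
    (hdvd : ∀ p ∈ L, p ∣ m) :
    ∃ i j k, i < j ∧ j < k ∧ k + 1 < n ∧
      (bTuple m L).getD i 0 + (bTuple m L).getD j 0 + (bTuple m L).getD k 0 ≡ 0 [MOD m] := by
  obtain _ | ⟨p, _ | ⟨q, L⟩⟩ := L
  · simp only [List.sum_nil] at hsum; omega
  · have hpn : p = n := by simpa using hsum
    exact ⟨0, 1, p - 4, by omega, by omega, by omega, bTuple_cons_sum_modEq_zero []
      (hdvd p (by simp)) (by omega) (by omega) (by omega) ⟨1, by omega⟩⟩
  have hpm := hdvd p (by simp)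
  have hp := hpos p (by simp)
  have hq := hpos q (by simp)
  have hqp : q ≤ p := (List.pairwise_cons.1 hsorted).1 q (by simp)
  simp only [List.sum_cons] at hsum
  by_cases hp3 : 3 ≤ p
  · exact ⟨0, p - 2, p - 1, by omega, by omega, by omega,
      bTuple_cons_sum_modEq_zero _ hpm (by omega) (by omega) (by omega) ⟨2, by omega⟩⟩
  obtain _ | ⟨r, L⟩ := L
  · simp only [List.sum_nil] at hsum; omega
  have hr := hpos r (by simp)
  have hrq : r ≤ q := (List.pairwise_cons.1 (List.pairwise_cons.1 hsorted).2).1 r (by simp)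
  by_cases hq2 : q = 2
  · obtain rfl : p = 2 := by omega
    subst hq2
    exact ⟨0, 1, 2, by omega, by omega, by omega, bTuple_two_two_sum_modEq_zero _ hpm⟩
  · obtain rfl : q = 1 := by omega
    obtain rfl : r = 1 := by omega
    exact ⟨p - 1, p, p + 1, by omega, by omega, by omega,
      bTuple_cons_one_one_sum_modEq_zero _ hpm hp⟩

theorem exists_tableau_index_zero (n : ℕ) (hn : 6 ≤ n)
    (L : List ℕ) (hpos : ∀ p ∈ L, 0 < p) (hsorted : List.Pairwise (· ≥ ·) L)
    (hsum : L.sum = n) :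
    ∃ T : ℕ × ℕ → ℕ, IsStandard (hookDiagram n (by omega)) n T ∧
      ∃ i j k : ℕ, 1 ≤ i ∧ i < j ∧ j < k ∧ k < n ∧
        descentSet (hookDiagram n (by omega)) T = {i, j, k} ∧
        (bSeq L).getD (i - 1) 0 + (bSeq L).getD (j - 1) 0 + (bSeq L).getD (k - 1) 0 ≡ 0
          [MOD partLcm L] := by
  obtain ⟨i, j, k, hij, hjk, hk, hmod⟩ :=
    exists_bTuple_sum_modEq_zero hn hpos hsorted hsum fun _ => dvd_partLcm
  obtain ⟨T, hT, hD⟩ := exists_isStandard_descentSet_hookDiagram_eq (Nat.le_add_left 1 i)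
    (Nat.succ_lt_succ hij) (Nat.succ_lt_succ hjk) hk
  refine ⟨T, hT, i + 1, j + 1, k + 1, by omega, by omega, by omega, hk, hD, ?_⟩
  simpa only [Nat.add_sub_cancel, bSeq_eq_bTuple] using hmod
end
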